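/- arXiv:2605.22062 — 3 statements merged into one kernel-verified Lean document; each statement's English description precedes it below -/
import Mathlib

section
/- For any u, v in the circle 𝕋 = ℝ/ℤ with q = [v-u]₁ the counterclockwise arc length in [0,1), the integral over b ∈ [0,1) of |[u-b]₁ - [v-b]₁| equals 2q(1-q). -/
/-!
Lebesgue measure on `[0,1)` is the Haar measure of `ℝ/ℤ`, which is invariant under `b ↦ u - b`,
so the cut point may be measured from `u`. Then `v - b` sits at distance `q` after it, and for
`t ∈ [0,1)` one has `|t - [t + q]₁| = q` when `t < 1 - q` and `1 - q` otherwise, whence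
`(1 - q) q + q (1 - q)`.
-/

open MeasureTheory Real

/-- The unique representative in `[0,1)` of a point of the circle `ℝ/ℤ`. -/
noncomputable def frac (x : UnitAddCircle) : ℝ := (AddCircle.equivIco 1 0 x : ℝ)

lemma frac_coe (x : ℝ) : frac (x : UnitAddCircle) = Int.fract x := by
  simp [frac, AddCircle.coe_equivIco_mk_apply]

lemma frac_mem_Ico (x : UnitAddCircle) : frac x ∈ Set.Ico 0 1 := by
  simpa [frac] using (AddCircle.equivIco 1 0 x).2

lemma coe_frac (x : UnitAddCircle) : ((frac x : ℝ) : UnitAddCircle) = x :=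
  AddCircle.coe_equivIco

namespace UnitAddCircle

variable {E : Type*} [NormedAddCommGroup E] [NormedSpace ℝ E]

lemma integral_Ico_preimage (t : ℝ) (f : UnitAddCircle → E) :
    ∫ a in Set.Ico t (t + 1), f a = ∫ b : UnitAddCircle, f b := by
  rw [integral_Ico_eq_integral_Ioc, UnitAddCircle.integral_preimage]

lemma integral_Ico_comp_sub_left (f : UnitAddCircle → E) (u : UnitAddCircle) :
    ∫ b in Set.Ico (0 : ℝ) 1, f (u - b) = ∫ b in Set.Ico (0 : ℝ) 1, f b := by
  have h (g : UnitAddCircle → E) : ∫ b in Set.Ico (0 : ℝ) 1, g b = ∫ b, g b := by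
    simpa using integral_Ico_preimage 0 g
  rw [h (fun b => f (u - b)), h f, integral_sub_left_eq_self]

end UnitAddCircle

section FractShift

variable {q : ℝ}

lemma abs_fract_sub_fract_add_of_mem_Ico_zero (hq : 0 ≤ q) {t : ℝ} (ht : t ∈ Set.Ico 0 (1 - q)) :
    |Int.fract t - Int.fract (t + q)| = q := by
  obtain ⟨ht0, ht1⟩ := ht
  rw [Int.fract_eq_self.2 ⟨ht0, by linarith⟩, Int.fract_eq_self.2 ⟨by linarith, by linarith⟩,
    sub_add_cancel_left, abs_neg, abs_of_nonneg hq]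

lemma abs_fract_sub_fract_add_of_mem_Ico_one_sub (hq : q ≤ 1) {t : ℝ}
    (ht : t ∈ Set.Ico (1 - q) 1) : |Int.fract t - Int.fract (t + q)| = 1 - q := by
  obtain ⟨ht0, ht1⟩ := ht
  have hshift : Int.fract (t + q) = t + q - 1 := by
    rw [← Int.fract_sub_one, Int.fract_eq_self.2 ⟨by linarith, by linarith⟩]
  rw [Int.fract_eq_self.2 ⟨by linarith, ht1⟩, hshift, abs_of_nonneg (by linarith)]
  ring

lemma setIntegral_Ico_eq_of_eqOn_const {f : ℝ → ℝ} {a b c : ℝ} (hab : a ≤ b)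
    (hf : Set.EqOn f (fun _ => c) (Set.Ico a b)) :
    IntegrableOn f (Set.Ico a b) ∧ ∫ t in Set.Ico a b, f t = (b - a) * c := by
  refine ⟨(integrableOn_const measure_Ico_lt_top.ne enorm_ne_top).congr_fun
    (fun t ht => (hf ht).symm) measurableSet_Ico, ?_⟩
  rw [setIntegral_congr_fun measurableSet_Ico hf, setIntegral_const,
    Real.volume_real_Ico_of_le hab, smul_eq_mul]

lemma integral_abs_fract_sub_fract_add (hq0 : 0 ≤ q) (hq1 : q ≤ 1) :
    ∫ t in Set.Ico (0 : ℝ) 1, |Int.fract t - Int.fract (t + q)| = 2 * q * (1 - q) := by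
  obtain ⟨hint₁, hval₁⟩ := setIntegral_Ico_eq_of_eqOn_const (by linarith)
    fun _ ht => abs_fract_sub_fract_add_of_mem_Ico_zero hq0 ht
  obtain ⟨hint₂, hval₂⟩ := setIntegral_Ico_eq_of_eqOn_const (by linarith)
    fun _ ht => abs_fract_sub_fract_add_of_mem_Ico_one_sub hq1 ht
  rw [← Set.Ico_union_Ico_eq_Ico (by linarith : (0 : ℝ) ≤ 1 - q) (by linarith),
    setIntegral_union Set.Ico_disjoint_Ico_same measurableSet_Ico hint₁ hint₂, hval₁, hval₂]
  ring

end FractShift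

/-- for `u, v` on the circle with `q = [v-u]₁`, averaging the linearized
absolute rank distance `|[u-b]₁ - [v-b]₁|` over the cut point `b ∈ [0,1)` gives `2q(1-q)`. -/
theorem stmt1 (u v : UnitAddCircle) (q : ℝ) (hq : q = frac (v - u)) :
    ∫ b in Set.Ico (0:ℝ) 1, |frac (u - (b : UnitAddCircle)) - frac (v - (b : UnitAddCircle))|
      = 2 * q * (1 - q) := by
  have hvu : v - u = q := by rw [hq, coe_frac]
  have hv : ∀ b : UnitAddCircle, v - b = (u - b) + q := fun b => by rw [← hvu]; abel
  simp_rw [hv]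
  rw [UnitAddCircle.integral_Ico_comp_sub_left (fun x => |frac x - frac (x + q)|)]
  simp_rw [← AddCircle.coe_add, frac_coe]
  obtain ⟨hq0, hq1⟩ := hq ▸ frac_mem_Ico (v - u)
  exact integral_abs_fract_sub_fract_add hq0 hq1.le
end

section
/- Let K be a probability measure on the circle 𝕋 = ℝ/ℤ such that ∫∫ H(u,v) K(du) K(dv) = 0, where H(u,v) = [v-u]₁(1-[v-u]₁). Then K is a Dirac point mass. Conversely, every Dirac point mass makes this double integral zero. -/
open MeasureTheory Real

/-- The circular rank discrepancy `H(u,v) = [v-u]₁ (1 - [v-u]₁)`. -/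
noncomputable def Hdisc (u v : UnitAddCircle) : ℝ := frac (v - u) * (1 - frac (v - u))

/-- By Fubini, for a.e. `u` we have `f u v = 0`, i.e. `v = u`, for a.e. `v`. -/
theorem exists_eq_dirac_of_integral_integral_eq_zero {X : Type*} [MeasurableSpace X]
    {K : Measure X} [IsProbabilityMeasure K] {f : X → X → ℝ}
    (hf : Integrable (Function.uncurry f) (K.prod K)) (hf_nonneg : ∀ u v, 0 ≤ f u v)
    (hf_eq_zero : ∀ u v, f u v = 0 → v = u) (h : ∫ u, ∫ v, f u v ∂K ∂K = 0) :
    ∃ x, K = Measure.dirac x := by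
  have hzero : Function.uncurry f =ᵐ[K.prod K] 0 :=
    (integral_eq_zero_iff_of_nonneg (f := Function.uncurry f) (fun p ↦ hf_nonneg p.1 p.2) hf).1
      ((integral_prod _ hf).trans h)
  obtain ⟨u, hu⟩ : ∃ u, ∀ᵐ v ∂K, f u v = 0 := (Measure.ae_ae_of_ae_prod hzero).exists
  have hK : (id : X → X) =ᵐ[K] fun _ ↦ u := hu.mono fun v ↦ hf_eq_zero u v
  exact ⟨u, by simpa using (ProbabilityTheory.hasLaw_dirac_of_ae_eq hK).map_eq⟩

lemma frac_mem (x : UnitAddCircle) : frac x ∈ Set.Ico (0 : ℝ) 1 := by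
  simpa [frac] using (AddCircle.equivIco 1 0 x).2

lemma frac_eq_zero_iff {x : UnitAddCircle} : frac x = 0 ↔ x = 0 := by
  constructor
  · intro h
    have hx : ((frac x : ℝ) : UnitAddCircle) = x := AddCircle.coe_equivIco
    rw [← hx, h, QuotientAddGroup.mk_zero]
  · rintro rfl
    simpa [frac] using AddCircle.coe_equivIco_mk_apply (p := (1 : ℝ)) 0

lemma measurable_frac : Measurable frac :=
  measurable_subtype_coe.comp (AddCircle.measurableEquivIco 1 0).measurable

lemma Hdisc_nonneg (u v : UnitAddCircle) : 0 ≤ Hdisc u v := by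
  have h := frac_mem (v - u)
  exact mul_nonneg h.1 (sub_nonneg.2 h.2.le)

lemma Hdisc_le_one (u v : UnitAddCircle) : Hdisc u v ≤ 1 := by
  have h := frac_mem (v - u)
  unfold Hdisc
  nlinarith [h.1, h.2]

lemma Hdisc_eq_zero_iff {u v : UnitAddCircle} : Hdisc u v = 0 ↔ v = u := by
  rw [Hdisc, mul_eq_zero, sub_eq_zero, frac_eq_zero_iff, sub_eq_zero, or_iff_left]
  exact (frac_mem (v - u)).2.ne'

lemma measurable_Hdisc : Measurable (Function.uncurry Hdisc) :=
  (measurable_frac.mul (measurable_const.sub measurable_frac)).comp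
    (measurable_snd.sub measurable_fst)

lemma integrable_Hdisc (K : Measure UnitAddCircle) [IsFiniteMeasure K] :
    Integrable (Function.uncurry Hdisc) (K.prod K) :=
  .of_bound measurable_Hdisc.aestronglyMeasurable 1 <| .of_forall fun p ↦
    (norm_of_nonneg (Hdisc_nonneg p.1 p.2)).trans_le (Hdisc_le_one p.1 p.2)

/-- a probability measure `K` on the circle satisfies
`∫∫ H(u,v) K(du) K(dv) = 0` if and only if `K` is a Dirac point mass. -/
theorem stmt4 (K : Measure UnitAddCircle) [IsProbabilityMeasure K] :
    ((∫ u, ∫ v, Hdisc u v ∂K ∂K) = 0 → ∃ x : UnitAddCircle, K = Measure.dirac x) ∧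
    (∀ x : UnitAddCircle, ∫ u, ∫ v, Hdisc u v ∂(Measure.dirac x) ∂(Measure.dirac x) = 0) := by
  refine ⟨exists_eq_dirac_of_integral_integral_eq_zero (integrable_Hdisc K) Hdisc_nonneg
    fun _ _ ↦ Hdisc_eq_zero_iff.1, fun x ↦ ?_⟩
  rw [integral_dirac, integral_dirac]
  exact Hdisc_eq_zero_iff.2 rfl
end

section
/- Let π = (π₁,...,πₙ) be a uniformly random cyclic listing of {0,1,...,n-1} (with π_{n+1} = π₁), and for adjacent edges set D_k = (π_{k+1} - π_k) mod n and Z_k = D_k(n - D_k). Then for two adjacent distinct edges, Cov(Z_j, Z_k) = -n(n-3)(n+1)/180. -/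
/-!
A permutation group acting transitively on a finite set hits every point equally often, and
`Equiv.Perm α` acts transitively on injective tuples; hence `(π_j, π_{j+1}, π_{j+2})` is uniform
on triples of distinct residues mod `n`. Summing `f (y - x) * g (z - y)` over such triples, the
terms with `x = y` or `y = z` vanish since `f 0 = g 0 = 0`, and what remains is
`n ((∑ f) (∑ g) - ∑ f d g (-d))`. For the even weight `f d = d (n - d)` this gives
`E[Z_j Z_{j+1}] = (A_n² - B_n) / ((n - 1)(n - 2))`, likewise `E[Z_j] = A_n / (n - 1)`, and the
covariance is a polynomial identity in `n`.
-/

open Filter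

/-- Cyclic rank increment `D_k = (π_{k+1} - π_k) mod n` of the cyclic listing `σ`. -/
def cycD (n : ℕ) [NeZero n] (σ : Equiv.Perm (Fin n)) (k : Fin n) : ℕ :=
  ((σ (k + 1) - σ k : Fin n) : ℕ)

/-- The edge weight `Z_k = D_k (n - D_k)`. -/
noncomputable def cycZ (n : ℕ) [NeZero n] (σ : Equiv.Perm (Fin n)) (k : Fin n) : ℝ :=
  (cycD n σ k : ℝ) * ((n : ℝ) - (cycD n σ k : ℝ))

/-- Expectation with respect to the uniform distribution on all `n!` cyclic listings. -/
noncomputable def permE (n : ℕ) (f : Equiv.Perm (Fin n) → ℝ) : ℝ :=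
  (∑ σ : Equiv.Perm (Fin n), f σ) / (Nat.factorial n : ℝ)

open Finset

section OrbitSum

variable {G X M : Type*} [Group G] [Fintype G] [MulAction G X] [Fintype X] [AddCommMonoid M]

theorem MulAction.card_nsmul_sum_smul_eq [MulAction.IsPretransitive G X] (x₀ : X) (F : X → M) :
    Fintype.card X • ∑ g : G, F (g • x₀) = Fintype.card G • ∑ x, F x := by
  have orbit_sum : ∀ x : X, ∑ g : G, F (g • x) = ∑ g : G, F (g • x₀) := by
    intro x
    obtain ⟨h, rfl⟩ := MulAction.exists_smul_eq G x₀ x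
    simp_rw [smul_smul]
    exact Fintype.sum_equiv (Equiv.mulRight h) _ _ fun _ => rfl
  calc Fintype.card X • ∑ g : G, F (g • x₀)
      = ∑ x : X, ∑ g : G, F (g • x) := by simp [orbit_sum]
    _ = ∑ g : G, ∑ x : X, F (g • x) := sum_comm
    _ = ∑ g : G, ∑ x : X, F x :=
        sum_congr rfl fun g _ => Fintype.sum_equiv (MulAction.toPerm g) _ _ fun _ => rfl
    _ = Fintype.card G • ∑ x, F x := by simp

end OrbitSum

namespace Function.Embedding

variable {α M : Type*}

def embFinThree {a b c : α} (hab : a ≠ b) (hac : a ≠ c) (hbc : b ≠ c) : Fin 3 ↪ α :=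
  ⟨![a, b, c], by intro i j h; fin_cases i <;> fin_cases j <;> simp_all [eq_comm]⟩

def threeEmbeddingEquiv :
    (Fin 3 ↪ α) ≃ {t : α × α × α // t.1 ≠ t.2.1 ∧ t.1 ≠ t.2.2 ∧ t.2.1 ≠ t.2.2} where
  toFun e := ⟨(e 0, e 1, e 2), by simp [e.injective.eq_iff]⟩
  invFun t := embFinThree t.2.1 t.2.2.1 t.2.2.2
  left_inv e := by ext i; fin_cases i <;> rfl

variable [Fintype α] [DecidableEq α] [AddCommMonoid M]

theorem sum_fin_two (F : α → α → M) :
    ∑ e : Fin 2 ↪ α, F (e 0) (e 1) = ∑ x, ∑ y, if x ≠ y then F x y else 0 := by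
  rw [Fintype.sum_equiv twoEmbeddingEquiv (fun e => F (e 0) (e 1)) (fun p => F p.1.1 p.1.2)
    fun _ => rfl, ← sum_subtype {p : α × α | p.1 ≠ p.2} (by simp) fun p => F p.1 p.2,
    sum_filter, Fintype.sum_prod_type]

theorem sum_fin_three (F : α → α → α → M) :
    ∑ e : Fin 3 ↪ α, F (e 0) (e 1) (e 2) =
      ∑ x, ∑ y, ∑ z, if x ≠ y ∧ x ≠ z ∧ y ≠ z then F x y z else 0 := by
  rw [Fintype.sum_equiv threeEmbeddingEquiv (fun e => F (e 0) (e 1) (e 2))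
    (fun t => F t.1.1 t.1.2.1 t.1.2.2) fun _ => rfl,
    ← sum_subtype {t : α × α × α | t.1 ≠ t.2.1 ∧ t.1 ≠ t.2.2 ∧ t.2.1 ≠ t.2.2} (by simp)
      fun t => F t.1 t.2.1 t.2.2,
    sum_filter]
  simp only [Fintype.sum_prod_type]

end Function.Embedding

namespace Equiv.Perm

variable {α M : Type*} [Fintype α] [DecidableEq α] [AddCommMonoid M]

theorem descFactorial_nsmul_sum_smul_eq {ι : Type*} [Fintype ι] (e₀ : ι ↪ α)
    (F : (ι ↪ α) → M) :
    (Fintype.card α).descFactorial (Fintype.card ι) • ∑ σ : Perm α, F (σ • e₀) =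
      (Fintype.card α).factorial • ∑ e, F e := by
  have : MulAction.IsPretransitive (Perm α) (ι ↪ α) := ⟨exists_smul_eq_embedding⟩
  simpa [Fintype.card_embedding_eq, Fintype.card_perm] using
    MulAction.card_nsmul_sum_smul_eq (G := Perm α) e₀ F

theorem descFactorial_two_nsmul_sum_apply {a b : α} (hab : a ≠ b) (F : α → α → M) :
    (Fintype.card α).descFactorial 2 • ∑ σ : Perm α, F (σ a) (σ b) =
      (Fintype.card α).factorial • ∑ x, ∑ y, if x ≠ y then F x y else 0 := by
  rw [← Function.Embedding.sum_fin_two]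
  exact descFactorial_nsmul_sum_smul_eq (Function.Embedding.embFinTwo hab)
    fun e => F (e 0) (e 1)

theorem descFactorial_three_nsmul_sum_apply {a b c : α} (hab : a ≠ b) (hac : a ≠ c)
    (hbc : b ≠ c) (F : α → α → α → M) :
    (Fintype.card α).descFactorial 3 • ∑ σ : Perm α, F (σ a) (σ b) (σ c) =
      (Fintype.card α).factorial •
        ∑ x, ∑ y, ∑ z, if x ≠ y ∧ x ≠ z ∧ y ≠ z then F x y z else 0 := by
  rw [← Function.Embedding.sum_fin_three]
  exact descFactorial_nsmul_sum_smul_eq (Function.Embedding.embFinThree hab hac hbc)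
    fun e => F (e 0) (e 1) (e 2)

end Equiv.Perm

section Differences

variable {α R : Type*} [AddCommGroup α] [Fintype α]

theorem sum_sum_sub_eq [AddCommMonoid R] (h : α → R) :
    ∑ x : α, ∑ y : α, h (y - x) = Fintype.card α • ∑ d, h d := by
  simp [fun x => Fintype.sum_equiv (Equiv.subRight x) (fun y => h (y - x)) h fun _ => rfl]

variable [DecidableEq α]

theorem sum_sum_ite_ne_sub [AddCommMonoid R] {f : α → R} (hf : f 0 = 0) :
    ∑ x : α, ∑ y : α, (if x ≠ y then f (y - x) else 0) = Fintype.card α • ∑ d, f d := by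
  rw [← sum_sum_sub_eq]
  refine sum_congr rfl fun x _ => sum_congr rfl fun y _ => ?_
  rcases eq_or_ne x y with rfl | hxy
  · simp [hf]
  · simp [hxy]

theorem sum_sum_sum_ite_distinct_sub_mul_sub [CommRing R] {f g : α → R} (hf : f 0 = 0)
    (hg : g 0 = 0) :
    ∑ x : α, ∑ y : α, ∑ z : α,
        (if x ≠ y ∧ x ≠ z ∧ y ≠ z then f (y - x) * g (z - y) else 0) =
      Fintype.card α • ((∑ d, f d) * (∑ d, g d) - ∑ d, f d * g (-d)) := by
  have pointwise : ∀ x y z : α,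
      (if x ≠ y ∧ x ≠ z ∧ y ≠ z then f (y - x) * g (z - y) else 0) =
        f (y - x) * g (z - y) - if z = x then f (y - x) * g (-(y - x)) else 0 := by
    intro x y z
    rcases eq_or_ne x y with rfl | hxy
    · simp [hf]
    rcases eq_or_ne y z with rfl | hyz
    · simp [hg, hxy.symm]
    rcases eq_or_ne z x with rfl | hzx
    · simp
    simp [hxy, hyz, hzx, hzx.symm]
  have inner : ∀ y : α, ∑ z, g (z - y) = ∑ d, g d := fun y =>
    Fintype.sum_equiv (Equiv.subRight y) _ _ fun _ => rfl
  simp only [pointwise, sum_sub_distrib, sum_ite_eq', mem_univ, if_true, ← mul_sum, inner]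
  rw [sum_sum_sub_eq (fun d => f d * ∑ d, g d), sum_sum_sub_eq (fun d => f d * g (-d)),
    ← sum_mul, smul_sub]

end Differences

theorem sum_range_cast (m : ℕ) : ∑ i ∈ range m, (i : ℝ) = m * (m - 1) / 2 := by
  induction m with
  | zero => simp
  | succ m ih => rw [sum_range_succ, ih]; push_cast; ring

theorem sum_range_cast_sq (m : ℕ) :
    ∑ i ∈ range m, (i : ℝ) ^ 2 = m * (m - 1) * (2 * m - 1) / 6 := by
  induction m with
  | zero => simp
  | succ m ih => rw [sum_range_succ, ih]; push_cast; ring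

theorem sum_range_cast_pow_three (m : ℕ) :
    ∑ i ∈ range m, (i : ℝ) ^ 3 = (m * (m - 1)) ^ 2 / 4 := by
  induction m with
  | zero => simp
  | succ m ih => rw [sum_range_succ, ih]; push_cast; ring

theorem sum_range_cast_pow_four (m : ℕ) :
    ∑ i ∈ range m, (i : ℝ) ^ 4 = m * (m - 1) * (2 * m - 1) * (3 * m ^ 2 - 3 * m - 1) / 30 := by
  induction m with
  | zero => simp
  | succ m ih => rw [sum_range_succ, ih]; push_cast; ring

noncomputable def edgeWeight (n : ℕ) (d : Fin n) : ℝ :=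
  (d : ℝ) * (n - d)

theorem sum_edgeWeight (n : ℕ) : ∑ d, edgeWeight n d = n * (n ^ 2 - 1) / 6 := by
  unfold edgeWeight
  rw [Fin.sum_univ_eq_sum_range (fun i => (i : ℝ) * (n - i))]
  have expand : ∀ i : ℕ, (i : ℝ) * (n - i) = n * i - i ^ 2 := fun i => by ring
  simp only [expand, sum_sub_distrib, ← mul_sum, sum_range_cast, sum_range_cast_sq]
  ring

theorem sum_edgeWeight_sq (n : ℕ) : ∑ d, edgeWeight n d ^ 2 = n * (n ^ 4 - 1) / 30 := by
  unfold edgeWeight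
  rw [Fin.sum_univ_eq_sum_range (fun i => ((i : ℝ) * (n - i)) ^ 2)]
  have expand : ∀ i : ℕ, ((i : ℝ) * (n - i)) ^ 2 = n ^ 2 * i ^ 2 - 2 * n * i ^ 3 + i ^ 4 :=
    fun i => by ring
  simp only [expand, sum_add_distrib, sum_sub_distrib, ← mul_sum, sum_range_cast_sq,
    sum_range_cast_pow_three, sum_range_cast_pow_four]
  ring

section EdgeWeight

variable (n : ℕ) [NeZero n]

theorem cycZ_eq_edgeWeight (σ : Equiv.Perm (Fin n)) (k : Fin n) :
    cycZ n σ k = edgeWeight n (σ (k + 1) - σ k) :=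
  rfl

theorem edgeWeight_zero : edgeWeight n 0 = 0 := by
  simp [edgeWeight]

theorem edgeWeight_neg (d : Fin n) : edgeWeight n (-d) = edgeWeight n d := by
  rcases eq_or_ne d 0 with rfl | hd
  · rw [neg_zero]
  have hd' : 0 < (d : ℕ) := Fin.pos_iff_ne_zero.mpr hd
  have hval : ((-d : Fin n) : ℕ) = n - d := by
    rw [Fin.val_neg', Nat.mod_eq_of_lt (by omega)]
  rw [edgeWeight, edgeWeight, hval, Nat.cast_sub d.isLt.le]
  ring

end EdgeWeight

section Expectation

variable {n : ℕ} [NeZero n]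

theorem permE_cycZ (hn : 2 ≤ n) (k : Fin n) :
    permE n (fun σ => cycZ n σ k) = n * (n + 1) / 6 := by
  have hk : k ≠ k + 1 := left_ne_add.mpr (by rw [Ne, Fin.one_eq_zero_iff]; omega)
  have key := Equiv.Perm.descFactorial_two_nsmul_sum_apply hk fun x y => edgeWeight n (y - x)
  rw [sum_sum_ite_ne_sub (edgeWeight_zero n), sum_edgeWeight, Fintype.card_fin] at key
  have hdesc : ((n.descFactorial 2 : ℕ) : ℝ) = n * (n - 1) := by
    simp [Nat.descFactorial_succ, Nat.cast_sub (by omega : 1 ≤ n)]; ring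
  simp only [nsmul_eq_mul, hdesc] at key
  have hn' : (2 : ℝ) ≤ n := by exact_mod_cast hn
  rw [permE, div_eq_iff (by positivity)]
  simp only [cycZ_eq_edgeWeight]
  refine mul_left_cancel₀ (show (n : ℝ) * (n - 1) ≠ 0 by nlinarith) ?_
  linear_combination key

theorem permE_cycZ_mul_cycZ_add_one (hn : 3 ≤ n) (j : Fin n) :
    permE n (fun σ => cycZ n σ j * cycZ n σ (j + 1)) =
      ((n * (n ^ 2 - 1) / 6) ^ 2 - n * (n ^ 4 - 1) / 30) / ((n - 1) * (n - 2)) := by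
  have h01 : j ≠ j + 1 := left_ne_add.mpr (by rw [Ne, Fin.one_eq_zero_iff]; omega)
  have h12 : j + 1 ≠ j + 1 + 1 := left_ne_add.mpr (by rw [Ne, Fin.one_eq_zero_iff]; omega)
  have h02 : j ≠ j + 1 + 1 := by
    rw [add_assoc, Ne, left_eq_add, Fin.ext_iff, Fin.val_add, Fin.val_one', Fin.val_zero,
      Nat.mod_eq_of_lt (by omega : 1 < n), Nat.mod_eq_of_lt (by omega : 2 < n)]
    omega
  have key := Equiv.Perm.descFactorial_three_nsmul_sum_apply h01 h02 h12
    fun x y z => edgeWeight n (y - x) * edgeWeight n (z - y)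
  rw [sum_sum_sum_ite_distinct_sub_mul_sub (edgeWeight_zero n) (edgeWeight_zero n)] at key
  simp only [edgeWeight_neg, ← pow_two, sum_edgeWeight, sum_edgeWeight_sq, Fintype.card_fin] at key
  have hdesc : ((n.descFactorial 3 : ℕ) : ℝ) = n * (n - 1) * (n - 2) := by
    simp [Nat.descFactorial_succ, Nat.cast_sub (by omega : 1 ≤ n),
      Nat.cast_sub (by omega : 2 ≤ n)]; ring
  simp only [nsmul_eq_mul, hdesc] at key
  have hn' : (3 : ℝ) ≤ n := by exact_mod_cast hn
  rw [permE, div_eq_div_iff (by positivity) (by nlinarith)]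
  simp only [cycZ_eq_edgeWeight]
  refine mul_left_cancel₀ (show (n : ℝ) ≠ 0 by positivity) ?_
  linear_combination key

end Expectation

theorem stmt11_general (n : ℕ) [NeZero n] (hn : 4 ≤ n) (j k : Fin n)
    (hadj : k = j + 1 ∨ j = k + 1) :
    permE n (fun σ => cycZ n σ j * cycZ n σ k)
      - permE n (fun σ => cycZ n σ j) * permE n (fun σ => cycZ n σ k)
      = -((n : ℝ) * ((n : ℝ) - 3) * ((n : ℝ) + 1)) / 180 := by
  have hn' : (4 : ℝ) ≤ n := by exact_mod_cast hn
  obtain ⟨i, hi⟩ : ∃ i : Fin n, permE n (fun σ => cycZ n σ j * cycZ n σ k) =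
      permE n (fun σ => cycZ n σ i * cycZ n σ (i + 1)) := by
    rcases hadj with rfl | rfl
    · exact ⟨j, rfl⟩
    · exact ⟨k, by simp only [mul_comm]⟩
  rw [hi, permE_cycZ_mul_cycZ_add_one (by omega), permE_cycZ (by omega),
    permE_cycZ (by omega)]
  field_simp [show (n : ℝ) - 1 ≠ 0 by linarith, show (n : ℝ) - 2 ≠ 0 by linarith]
  ring

/-- for a uniformly random cyclic listing of `{0,...,n-1}`, the covariance
of the weights `Z_j, Z_k` of two adjacent distinct cyclic edges equals `-n(n-3)(n+1)/180`. -/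
theorem stmt11 (n : ℕ) [NeZero n] (hn : 4 ≤ n) (j k : Fin n) (hjk : j ≠ k)
    (hadj : k = j + 1 ∨ j = k + 1) :
    permE n (fun σ => cycZ n σ j * cycZ n σ k)
      - permE n (fun σ => cycZ n σ j) * permE n (fun σ => cycZ n σ k)
      = -((n : ℝ) * ((n : ℝ) - 3) * ((n : ℝ) + 1)) / 180 :=
  stmt11_general n hn j k hadj
end
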